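/- arXiv:2310.12613 — 2 statements merged into one kernel-verified Lean document; each statement's English description precedes it below -/
import Mathlib

section
/- Let φ = Gψ be an LTL formula and let B := B(φ) be its basis. For every C ⊆ B, the three formulas Gψ, ψ U G(eval(ψ,C)), and G(eval(ψ,C)) R ψ are pairwise equivalent under context ⟨C,B⟩. -/
namespace LTLNorm

/-- LTL formulas in negation normal form. -/
inductive F (Ap : Type) : Type
  | tt    : F Ap
  | ff    : F Ap
  | pos   : Ap → F Ap
  | nlit  : Ap → F Ap
  | and   : F Ap → F Ap → F Ap
  | or    : F Ap → F Ap → F Ap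
  | next  : F Ap → F Ap
  | untl  : F Ap → F Ap → F Ap
  | wuntl : F Ap → F Ap → F Ap
  | rel   : F Ap → F Ap → F Ap
  | srel  : F Ap → F Ap → F Ap
  deriving DecidableEq

/-- Infinite words over the alphabet `2^Ap`. -/
abbrev Word (Ap : Type) := ℕ → Set Ap

/-- Suffix of a word starting at position `i`. -/
def suff {Ap : Type} (w : Word Ap) (i : ℕ) : Word Ap := fun n => w (n + i)

/-- Satisfaction relation. -/
def Sat {Ap : Type} : Word Ap → F Ap → Prop
  | _, F.tt => True
  | _, F.ff => False
  | w, F.pos a => a ∈ w 0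
  | w, F.nlit a => a ∉ w 0
  | w, F.and φ ψ => Sat w φ ∧ Sat w ψ
  | w, F.or φ ψ => Sat w φ ∨ Sat w ψ
  | w, F.next φ => Sat (suff w 1) φ
  | w, F.untl φ ψ => ∃ k, Sat (suff w k) ψ ∧ ∀ j < k, Sat (suff w j) φ
  | w, F.wuntl φ ψ => (∀ k, Sat (suff w k) φ) ∨ ∃ k, Sat (suff w k) ψ ∧ ∀ j < k, Sat (suff w j) φ
  | w, F.srel φ ψ => ∃ k, Sat (suff w k) φ ∧ ∀ j ≤ k, Sat (suff w j) ψ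
  | w, F.rel φ ψ => (∀ k, Sat (suff w k) ψ) ∨ ∃ k, Sat (suff w k) φ ∧ ∀ j ≤ k, Sat (suff w j) ψ

/-- Equivalence of formulas. -/
def Equiv {Ap : Type} (φ ψ : F Ap) : Prop := ∀ w : Word Ap, Sat w φ ↔ Sat w ψ

/-- Entailment: every word satisfying `φ` satisfies `ψ`. -/
def Entails {Ap : Type} (φ ψ : F Ap) : Prop := ∀ w : Word Ap, Sat w φ → Sat w ψ

/-- F φ := tt U φ -/
def Ff {Ap : Type} (φ : F Ap) : F Ap := F.untl F.tt φ
/-- G φ := φ W ff -/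
def Gf {Ap : Type} (φ : F Ap) : F Ap := F.wuntl φ F.ff
/-- GF φ := G (F φ) -/
def GFf {Ap : Type} (φ : F Ap) : F Ap := Gf (Ff φ)
/-- FG φ := F (G φ) -/
def FGf {Ap : Type} (φ : F Ap) : F Ap := Ff (Gf φ)

/-- Number of nodes of the syntax tree. -/
def size {Ap : Type} : F Ap → ℕ
  | F.tt => 1
  | F.ff => 1
  | F.pos _ => 1
  | F.nlit _ => 1
  | F.and φ ψ => size φ + size ψ + 1
  | F.or φ ψ => size φ + size ψ + 1
  | F.next φ => size φ + 1
  | F.untl φ ψ => size φ + size ψ + 1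
  | F.wuntl φ ψ => size φ + size ψ + 1
  | F.rel φ ψ => size φ + size ψ + 1
  | F.srel φ ψ => size φ + size ψ + 1

/-- The dual of a formula in negation normal form. -/
def dual {Ap : Type} : F Ap → F Ap
  | F.tt => F.ff
  | F.ff => F.tt
  | F.pos a => F.nlit a
  | F.nlit a => F.pos a
  | F.and φ ψ => F.or (dual φ) (dual ψ)
  | F.or φ ψ => F.and (dual φ) (dual ψ)
  | F.next φ => F.next (dual φ)
  | F.untl φ ψ => F.rel (dual φ) (dual ψ)
  | F.rel φ ψ => F.untl (dual φ) (dual ψ)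
  | F.wuntl φ ψ => F.srel (dual φ) (dual ψ)
  | F.srel φ ψ => F.wuntl (dual φ) (dual ψ)

/-- `LangC B C` is the set of words satisfying every formula of `C` and
no formula of `B \ C` (the language of the context `⟨C,B⟩`). -/
def LangC {Ap : Type} (B C : Finset (F Ap)) : Set (Word Ap) :=
  {w | (∀ ψ ∈ C, Sat w ψ) ∧ ∀ ψ ∈ B, ψ ∉ C → ¬ Sat w ψ}

/-- Equivalence under the context `⟨C,B⟩`. -/
def EquivUnder {Ap : Type} (B C : Finset (F Ap)) (φ₁ φ₂ : F Ap) : Prop :=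
  ∀ w ∈ LangC B C, (Sat w φ₁ ↔ Sat w φ₂)

/-- Disjunction of a list of formulas. -/
def bigOr {Ap : Type} (l : List (F Ap)) : F Ap := l.foldr F.or F.ff

/-- Conjunction of a list of formulas. -/
def bigAnd {Ap : Type} (l : List (F Ap)) : F Ap := l.foldr F.and F.tt

variable {Ap : Type} [DecidableEq Ap]

/-- The set of subformulas of a formula. -/
def sf : F Ap → Finset (F Ap)
  | F.tt => {F.tt}
  | F.ff => {F.ff}
  | F.pos a => {F.pos a}
  | F.nlit a => {F.nlit a}
  | F.and φ ψ => insert (F.and φ ψ) (sf φ ∪ sf ψ)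
  | F.or φ ψ => insert (F.or φ ψ) (sf φ ∪ sf ψ)
  | F.next φ => insert (F.next φ) (sf φ)
  | F.untl φ ψ => insert (F.untl φ ψ) (sf φ ∪ sf ψ)
  | F.wuntl φ ψ => insert (F.wuntl φ ψ) (sf φ ∪ sf ψ)
  | F.rel φ ψ => insert (F.rel φ ψ) (sf φ ∪ sf ψ)
  | F.srel φ ψ => insert (F.srel φ ψ) (sf φ ∪ sf ψ)

/-- `B_GF(φ) = { GF ψ : χ U ψ or ψ M χ is a subformula of φ }`. -/
def BGF (φ : F Ap) : Finset (F Ap) :=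
  (sf φ).biUnion fun σ =>
    match σ with
    | F.untl _ ψ => {GFf ψ}
    | F.srel ψ _ => {GFf ψ}
    | _ => ∅

/-- `B_FG(φ) = { FG ψ : χ W ψ or ψ R χ is a subformula of φ }`. -/
def BFG (φ : F Ap) : Finset (F Ap) :=
  (sf φ).biUnion fun σ =>
    match σ with
    | F.wuntl _ ψ => {FGf ψ}
    | F.rel ψ _ => {FGf ψ}
    | _ => ∅

/-- The basis `B(φ) = B_GF(φ) ∪ B_FG(φ)`. -/
def Bset (φ : F Ap) : Finset (F Ap) := BGF φ ∪ BFG φ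

/-- The argument of a basis formula: `GF ψ ↦ ψ` and `FG ψ ↦ ψ`. -/
def innerArg : F Ap → F Ap
  | F.wuntl (F.untl F.tt ψ) F.ff => ψ      -- GF ψ
  | F.untl F.tt (F.wuntl ψ F.ff) => ψ      -- FG ψ
  | φ => φ

/-- `⇓ψ`: the basis formulas of `B(φ0)` strictly below `op(ψ)` in the order `≺`,
i.e. those whose argument is a subformula of `ψ`. -/
def down (φ0 ψ : F Ap) : Finset (F Ap) :=
  (Bset φ0).filter fun χ => innerArg χ ∈ sf ψ

/-- The formula `eval(ψ, C)`. -/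
def eval (C : Finset (F Ap)) : F Ap → F Ap
  | F.tt => F.tt
  | F.ff => F.ff
  | F.pos a => F.pos a
  | F.nlit a => F.nlit a
  | F.and φ ψ => F.and (eval C φ) (eval C ψ)
  | F.or φ ψ => F.or (eval C φ) (eval C ψ)
  | F.next φ => F.next (eval C φ)
  | F.wuntl φ ψ => F.wuntl (eval C φ) (eval C ψ)
  | F.rel φ ψ => F.rel (eval C φ) (eval C ψ)
  | F.untl φ ψ => if GFf ψ ∈ C then F.wuntl (eval C φ) (eval C ψ) else F.ff
  | F.srel φ ψ => if GFf φ ∈ C then F.rel (eval C φ) (eval C ψ) else F.ff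


end LTLNorm

/-!
Write `e := eval(ψ, C)` and fix a word `w` in `L(C|B)`. Since every `GF χ ∈ C` holds on `w`
and on all of its suffixes, an `χ' W χ` (resp. `χ R χ'`) produced by `eval` can be turned
back into `χ' U χ` (resp. `χ M χ'`), so `e` entails `ψ` on every suffix of `w`. Conversely,
for an `U`/`M` subformula whose `GF` formula lies in `B ∖ C`, the argument is eventually
false on `w`, so from some position `N` on that subformula is as false as its image `ff`
under `eval`; hence `ψ` entails `e` on every suffix of `w` beyond `N`. Therefore
`Gψ` holds iff `ψ` holds up to some point from which `Ge` holds, which is both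
`ψ U Ge` and `Ge R ψ`.
-/

namespace LTLNorm

open Filter

section Lemmas

variable {Ap : Type} {w : Word Ap} {a a' b b' χ φ ψ e : F Ap}

lemma suff_suff (w : Word Ap) (i j : ℕ) : suff (suff w i) j = suff w (j + i) := by
  funext n
  simp only [suff, Nat.add_assoc]

lemma suff_suff_sub {k m : ℕ} (h : k ≤ m) : suff (suff w k) (m - k) = suff w m := by
  rw [suff_suff, Nat.sub_add_cancel h]

lemma sat_Gf : Sat w (Gf χ) ↔ ∀ k, Sat (suff w k) χ := by
  simp [Gf, Sat]

lemma sat_GFf_iff_frequently : Sat w (GFf χ) ↔ ∃ᶠ i in atTop, Sat (suff w i) χ := by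
  simp only [GFf, sat_Gf, Ff, Sat, suff_suff, frequently_atTop]
  refine ⟨fun h k => ?_, fun h k => ?_⟩
  · obtain ⟨m, hm, -⟩ := h k
    exact ⟨m + k, by omega, hm⟩
  · obtain ⟨m, hkm, hm⟩ := h k
    exact ⟨m - k, by rwa [Nat.sub_add_cancel hkm], fun _ _ => trivial⟩

lemma sat_GFf_suff (i : ℕ) : Sat (suff w i) (GFf χ) ↔ Sat w (GFf χ) := by
  simp only [sat_GFf_iff_frequently, suff_suff]
  conv_rhs => rw [← map_add_atTop_eq_nat i, frequently_map]

lemma exists_sat_of_sat_GFf (h : Sat w (GFf χ)) : ∃ k, Sat (suff w k) χ :=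
  (sat_GFf_iff_frequently.1 h).exists

def EntailsOn (w : Word Ap) (φ ψ : F Ap) : Prop := ∀ k, Sat (suff w k) φ → Sat (suff w k) ψ

namespace EntailsOn

lemma suff (h : EntailsOn w φ ψ) (i : ℕ) : EntailsOn (LTLNorm.suff w i) φ ψ := fun k => by
  simpa only [suff_suff] using h (k + i)

lemma and (ha : EntailsOn w a a') (hb : EntailsOn w b b') :
    EntailsOn w (F.and a b) (F.and a' b') :=
  fun k h => ⟨ha k h.1, hb k h.2⟩

lemma or (ha : EntailsOn w a a') (hb : EntailsOn w b b') :
    EntailsOn w (F.or a b) (F.or a' b') :=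
  fun k h => h.imp (ha k) (hb k)

lemma next (h : EntailsOn w a a') : EntailsOn w (F.next a) (F.next a') :=
  fun k => (h.suff k) 1

lemma untl (ha : EntailsOn w a a') (hb : EntailsOn w b b') :
    EntailsOn w (F.untl a b) (F.untl a' b') := fun k ⟨j, hj, hlt⟩ =>
  ⟨j, hb.suff k j hj, fun i hi => ha.suff k i (hlt i hi)⟩

lemma srel (ha : EntailsOn w a a') (hb : EntailsOn w b b') :
    EntailsOn w (F.srel a b) (F.srel a' b') := fun k ⟨j, hj, hle⟩ =>
  ⟨j, ha.suff k j hj, fun i hi => hb.suff k i (hle i hi)⟩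

lemma wuntl (ha : EntailsOn w a a') (hb : EntailsOn w b b') :
    EntailsOn w (F.wuntl a b) (F.wuntl a' b') := fun k =>
  Or.imp (fun h i => ha.suff k i (h i)) ((ha.untl hb) k)

lemma rel (ha : EntailsOn w a a') (hb : EntailsOn w b b') :
    EntailsOn w (F.rel a b) (F.rel a' b') := fun k =>
  Or.imp (fun h i => hb.suff k i (h i)) ((ha.srel hb) k)

end EntailsOn

lemma sat_untl_of_sat_wuntl (h : Sat w (F.wuntl a b)) (hb : ∃ k, Sat (suff w k) b) :
    Sat w (F.untl a b) := by
  rcases h with hG | hU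
  · obtain ⟨k, hk⟩ := hb
    exact ⟨k, hk, fun j _ => hG j⟩
  · exact hU

lemma sat_srel_of_sat_rel (h : Sat w (F.rel a b)) (ha : ∃ k, Sat (suff w k) a) :
    Sat w (F.srel a b) := by
  rcases h with hG | hM
  · obtain ⟨k, hk⟩ := ha
    exact ⟨k, hk, fun j _ => hG j⟩
  · exact hM

lemma eventually_entailsOn_ff_of_not_sat_GFf (h : ¬ Sat w (GFf χ)) :
    ∀ᶠ N in atTop, EntailsOn (suff w N) χ F.ff := by
  rw [sat_GFf_iff_frequently, not_frequently, eventually_atTop] at h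
  obtain ⟨M, hM⟩ := h
  exact eventually_atTop.2 ⟨M, fun N hN k hk => hM (k + N) (by omega) (by rwa [suff_suff] at hk)⟩

lemma sat_Gf_of_forall_lt (hs : EntailsOn w e ψ) {k : ℕ} (hlt : ∀ j < k, Sat (suff w j) ψ)
    (hk : Sat (suff w k) (Gf e)) : Sat w (Gf ψ) := by
  refine sat_Gf.2 fun m => ?_
  rcases lt_or_ge m k with hm | hm
  · exact hlt m hm
  · exact hs m (suff_suff_sub hm ▸ sat_Gf.1 hk (m - k))

lemma sat_Gf_iff_sat_untl (hs : EntailsOn w e ψ) (hc : ∃ N, EntailsOn (suff w N) ψ e) :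
    Sat w (Gf ψ) ↔ Sat w (F.untl ψ (Gf e)) := by
  obtain ⟨N, hN⟩ := hc
  refine ⟨fun h => ⟨N, sat_Gf.2 fun k => hN k ?_, fun j _ => sat_Gf.1 h j⟩,
    fun ⟨k, hk, hlt⟩ => sat_Gf_of_forall_lt hs hlt hk⟩
  rw [suff_suff]
  exact sat_Gf.1 h _

lemma sat_Gf_iff_sat_rel (hs : EntailsOn w e ψ) : Sat w (Gf ψ) ↔ Sat w (F.rel (Gf e) ψ) :=
  ⟨fun h => Or.inl (sat_Gf.1 h), fun h => h.elim sat_Gf.2 fun ⟨_, hk, hle⟩ =>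
    sat_Gf_of_forall_lt hs (fun j hj => hle j hj.le) hk⟩

variable [DecidableEq Ap] {C : Finset (F Ap)}

theorem entailsOn_eval (hC : ∀ χ, GFf χ ∈ C → Sat w (GFf χ)) (φ : F Ap) :
    EntailsOn w (eval C φ) φ := by
  induction φ with
  | tt | ff | pos | nlit => exact fun _ h => h
  | and a b iha ihb => exact iha.and ihb
  | or a b iha ihb => exact iha.or ihb
  | next a ih => exact ih.next
  | wuntl a b iha ihb => exact iha.wuntl ihb
  | rel a b iha ihb => exact iha.rel ihb
  | untl a b iha ihb =>
    intro k h
    rw [eval] at h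
    split_ifs at h with hb
    · exact sat_untl_of_sat_wuntl (iha.wuntl ihb k h)
        (exists_sat_of_sat_GFf ((sat_GFf_suff k).2 (hC b hb)))
    · exact h.elim
  | srel a b iha ihb =>
    intro k h
    rw [eval] at h
    split_ifs at h with ha
    · exact sat_srel_of_sat_rel (iha.rel ihb k h)
        (exists_sat_of_sat_GFf ((sat_GFf_suff k).2 (hC a ha)))
    · exact h.elim

lemma forall_mem_BGF_of_sf_subset {P : F Ap → Prop} (hP : ∀ χ ∈ BGF ψ, P χ)
    (h : sf φ ⊆ sf ψ := by intro _ h; simp [sf, h]) : ∀ χ ∈ BGF φ, P χ :=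
  fun χ hχ => hP χ (Finset.biUnion_subset_biUnion_of_subset_left _ h hχ)

lemma GFf_mem_BGF_untl : GFf b ∈ BGF (F.untl a b) :=
  Finset.mem_biUnion.2 ⟨F.untl a b, by simp [sf], by simp⟩

lemma GFf_mem_BGF_srel : GFf a ∈ BGF (F.srel a b) :=
  Finset.mem_biUnion.2 ⟨F.srel a b, by simp [sf], by simp⟩

theorem eventually_entailsOn_eval (φ : F Ap) (hC : ∀ χ ∈ BGF φ, χ ∉ C → ¬ Sat w χ) :
    ∀ᶠ N in atTop, EntailsOn (suff w N) φ (eval C φ) := by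
  induction φ with
  | tt | ff | pos | nlit => exact .of_forall fun _ _ h => h
  | next a ih =>
    filter_upwards [ih (forall_mem_BGF_of_sf_subset hC)] with N ha using ha.next
  | and a b iha ihb =>
    filter_upwards [iha (forall_mem_BGF_of_sf_subset hC), ihb (forall_mem_BGF_of_sf_subset hC)]
      with N ha hb using ha.and hb
  | or a b iha ihb =>
    filter_upwards [iha (forall_mem_BGF_of_sf_subset hC), ihb (forall_mem_BGF_of_sf_subset hC)]
      with N ha hb using ha.or hb
  | wuntl a b iha ihb =>
    filter_upwards [iha (forall_mem_BGF_of_sf_subset hC), ihb (forall_mem_BGF_of_sf_subset hC)]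
      with N ha hb using ha.wuntl hb
  | rel a b iha ihb =>
    filter_upwards [iha (forall_mem_BGF_of_sf_subset hC), ihb (forall_mem_BGF_of_sf_subset hC)]
      with N ha hb using ha.rel hb
  | untl a b iha ihb =>
    rw [eval]
    split_ifs with hbC
    · filter_upwards [iha (forall_mem_BGF_of_sf_subset hC), ihb (forall_mem_BGF_of_sf_subset hC)]
        with N ha hb k h using Or.inr ((ha.untl hb) k h)
    · filter_upwards [eventually_entailsOn_ff_of_not_sat_GFf (hC _ GFf_mem_BGF_untl hbC)]
        with N hN k using fun ⟨j, hj, _⟩ => hN.suff k j hj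
  | srel a b iha ihb =>
    rw [eval]
    split_ifs with haC
    · filter_upwards [iha (forall_mem_BGF_of_sf_subset hC), ihb (forall_mem_BGF_of_sf_subset hC)]
        with N ha hb k h using Or.inr ((ha.srel hb) k h)
    · filter_upwards [eventually_entailsOn_ff_of_not_sat_GFf (hC _ GFf_mem_BGF_srel haC)]
        with N hN k using fun ⟨j, hj, _⟩ => hN.suff k j hj

end Lemmas

theorem flatten_G_lemma_general {Ap : Type} [DecidableEq Ap] (ψ : F Ap) :
    ∀ C ⊆ Bset (Gf ψ),
      EquivUnder (Bset (Gf ψ)) C (Gf ψ) (F.untl ψ (Gf (eval C ψ))) ∧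
      EquivUnder (Bset (Gf ψ)) C (Gf ψ) (F.rel (Gf (eval C ψ)) ψ) ∧
      EquivUnder (Bset (Gf ψ)) C (F.untl ψ (Gf (eval C ψ))) (F.rel (Gf (eval C ψ)) ψ) := by
  intro C _
  have key : ∀ w ∈ LangC (Bset (Gf ψ)) C,
      (Sat w (Gf ψ) ↔ Sat w (F.untl ψ (Gf (eval C ψ)))) ∧
      (Sat w (Gf ψ) ↔ Sat w (F.rel (Gf (eval C ψ)) ψ)) := by
    intro w ⟨hC, hnC⟩
    have sound := entailsOn_eval (fun χ => hC _) ψ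
    have complete := (eventually_entailsOn_eval ψ (forall_mem_BGF_of_sf_subset
      (fun χ hχ => hnC χ (Finset.mem_union_left _ hχ)) (fun _ h => by simp [Gf, sf, h]))).exists
    exact ⟨sat_Gf_iff_sat_untl sound complete, sat_Gf_iff_sat_rel sound⟩
  exact ⟨fun w hw => (key w hw).1, fun w hw => (key w hw).2,
    fun w hw => (key w hw).1.symm.trans (key w hw).2⟩

/-- for `φ = Gψ` and `B := B(φ)`, the formulas `Gψ`,
`ψ U G(eval(ψ,C))` and `G(eval(ψ,C)) R ψ` are pairwise equivalent under
context `⟨C,B⟩`. -/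
theorem flatten_G_lemma {Ap : Type} [Fintype Ap] [DecidableEq Ap] (ψ : F Ap) :
    ∀ C ⊆ Bset (Gf ψ),
      EquivUnder (Bset (Gf ψ)) C (Gf ψ) (F.untl ψ (Gf (eval C ψ))) ∧
      EquivUnder (Bset (Gf ψ)) C (Gf ψ) (F.rel (Gf (eval C ψ)) ψ) ∧
      EquivUnder (Bset (Gf ψ)) C (F.untl ψ (Gf (eval C ψ))) (F.rel (Gf (eval C ψ)) ψ) :=
  flatten_G_lemma_general ψ

end LTLNorm
end

section
/- For every extended LTL formula with placeholders φ and all extended LTL formulas ψ: (1) φ[GF ψ] ≡ (GF ψ ∧ φ[tt]) ∨ φ[ff]; (2) φ[FG ψ] ≡ (FG ψ ∧ φ[tt]) ∨ φ[ff]. -/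
namespace ExtLTL

/-- Extended LTL formulas, with the limit operators `GF` and `FG` as atomic
operators. -/
inductive E (Ap : Type) : Type
  | tt    : E Ap
  | ff    : E Ap
  | pos   : Ap → E Ap
  | nlit  : Ap → E Ap
  | and   : E Ap → E Ap → E Ap
  | or    : E Ap → E Ap → E Ap
  | next  : E Ap → E Ap
  | untl  : E Ap → E Ap → E Ap
  | wuntl : E Ap → E Ap → E Ap
  | gf    : E Ap → E Ap
  | fg    : E Ap → E Ap
  deriving DecidableEq

/-- Infinite words over the alphabet `2^Ap`. -/
abbrev Word (Ap : Type) := ℕ → Set Ap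

/-- Suffix of a word starting at position `i`. -/
def suff {Ap : Type} (w : Word Ap) (i : ℕ) : Word Ap := fun n => w (n + i)

/-- Satisfaction relation for extended LTL. -/
def Sat {Ap : Type} : Word Ap → E Ap → Prop
  | _, E.tt => True
  | _, E.ff => False
  | w, E.pos a => a ∈ w 0
  | w, E.nlit a => a ∉ w 0
  | w, E.and φ ψ => Sat w φ ∧ Sat w ψ
  | w, E.or φ ψ => Sat w φ ∨ Sat w ψ
  | w, E.next φ => Sat (suff w 1) φ
  | w, E.untl φ ψ => ∃ k, Sat (suff w k) ψ ∧ ∀ j < k, Sat (suff w j) φ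
  | w, E.wuntl φ ψ => (∀ k, Sat (suff w k) φ) ∨ ∃ k, Sat (suff w k) ψ ∧ ∀ j < k, Sat (suff w j) φ
  | w, E.gf φ => ∀ i : ℕ, ∃ j : ℕ, i ≤ j ∧ Sat (suff w j) φ
  | w, E.fg φ => ∃ i : ℕ, ∀ j : ℕ, i ≤ j → Sat (suff w j) φ

/-- Equivalence of extended LTL formulas. -/
def Equiv {Ap : Type} (φ ψ : E Ap) : Prop := ∀ w : Word Ap, Sat w φ ↔ Sat w ψ

/-- G φ := φ W ff. -/
def Gf {Ap : Type} (φ : E Ap) : E Ap := E.wuntl φ E.ff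

/-- Number of nodes of the syntax tree. -/
def size {Ap : Type} : E Ap → ℕ
  | E.tt => 1
  | E.ff => 1
  | E.pos _ => 1
  | E.nlit _ => 1
  | E.and φ ψ => size φ + size ψ + 1
  | E.or φ ψ => size φ + size ψ + 1
  | E.next φ => size φ + 1
  | E.untl φ ψ => size φ + size ψ + 1
  | E.wuntl φ ψ => size φ + size ψ + 1
  | E.gf φ => size φ + 1
  | E.fg φ => size φ + 1

/-- Formulas with placeholders: extended LTL formulas over `Option Ap`, where
the extra atomic proposition `pos none` is the placeholder `[·]`. -/
abbrev EP (Ap : Type) := E (Option Ap)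

/-- The placeholder occurs only positively (never negated). -/
def posOnly {Ap : Type} : EP Ap → Prop
  | E.nlit none => False
  | E.and φ ψ => posOnly φ ∧ posOnly ψ
  | E.or φ ψ => posOnly φ ∧ posOnly ψ
  | E.next φ => posOnly φ
  | E.untl φ ψ => posOnly φ ∧ posOnly ψ
  | E.wuntl φ ψ => posOnly φ ∧ posOnly ψ
  | E.gf φ => posOnly φ
  | E.fg φ => posOnly φ
  | _ => True

/-- `subst φ ψ = φ[ψ]`: substitute `ψ` for every occurrence of the placeholder
in `φ`. -/
def subst {Ap : Type} : EP Ap → E Ap → E Ap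
  | E.tt, _ => E.tt
  | E.ff, _ => E.ff
  | E.pos none, ψ => ψ
  | E.pos (some a), _ => E.pos a
  | E.nlit none, _ => E.ff    -- never occurs in a formula with positive placeholders
  | E.nlit (some a), _ => E.nlit a
  | E.and φ₁ φ₂, ψ => E.and (subst φ₁ ψ) (subst φ₂ ψ)
  | E.or φ₁ φ₂, ψ => E.or (subst φ₁ ψ) (subst φ₂ ψ)
  | E.next φ, ψ => E.next (subst φ ψ)
  | E.untl φ₁ φ₂, ψ => E.untl (subst φ₁ ψ) (subst φ₂ ψ)
  | E.wuntl φ₁ φ₂, ψ => E.wuntl (subst φ₁ ψ) (subst φ₂ ψ)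
  | E.gf φ, ψ => E.gf (subst φ ψ)
  | E.fg φ, ψ => E.fg (subst φ ψ)

/-! `GF ψ` and `FG ψ` are prefix-independent: on a fixed word `w` they hold on every suffix
or on none. Since every operator evaluates its arguments only on suffixes of `w`, the
placeholder can then be replaced by the constant `tt` or `ff`, according to whether `w`
satisfies the limit formula. Positivity of the placeholder gives `φ[ff] → φ[tt]`, which
merges the two cases into a single disjunction. -/

section

variable {Ap : Type}

theorem suff_suff (w : Word Ap) (i j : ℕ) :
    suff (suff w i) j = suff w (j + i) :=
  funext fun n => congrArg w (add_assoc n j i)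

theorem sat_suff_suff_iff {χ₁ χ₂ : E Ap} {w : Word Ap}
    (h : ∀ k, Sat (suff w k) χ₁ ↔ Sat (suff w k) χ₂) (j k : ℕ) :
    Sat (suff (suff w j) k) χ₁ ↔ Sat (suff (suff w j) k) χ₂ := by
  rw [suff_suff]
  exact h _

def PrefixIndependent (χ : E Ap) : Prop :=
  ∀ (w : Word Ap) (k : ℕ), Sat (suff w k) χ ↔ Sat w χ

theorem prefixIndependent_gf (ψ : E Ap) : PrefixIndependent (E.gf ψ) := by
  intro w k
  simp only [Sat, suff_suff]
  constructor
  · intro h i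
    obtain ⟨j, hij, hj⟩ := h i
    exact ⟨j + k, by omega, hj⟩
  · intro h i
    obtain ⟨j, hij, hj⟩ := h (i + k)
    refine ⟨j - k, by omega, ?_⟩
    rwa [Nat.sub_add_cancel (by omega)]

theorem prefixIndependent_fg (ψ : E Ap) : PrefixIndependent (E.fg ψ) := by
  intro w k
  simp only [Sat, suff_suff]
  constructor
  · rintro ⟨i, hi⟩
    refine ⟨i + k, fun j hj => ?_⟩
    simpa [Nat.sub_add_cancel (show k ≤ j by omega)] using hi (j - k) (by omega)
  · rintro ⟨i, hi⟩
    exact ⟨i, fun j hj => hi (j + k) (by omega)⟩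

theorem sat_subst_congr (φ : EP Ap) {χ₁ χ₂ : E Ap} {w : Word Ap}
    (h : ∀ k, Sat (suff w k) χ₁ ↔ Sat (suff w k) χ₂) :
    Sat w (subst φ χ₁) ↔ Sat w (subst φ χ₂) := by
  induction φ generalizing w with
  | pos a =>
    cases a with
    | none => exact h 0
    | some a => rfl
  | nlit a => cases a <;> rfl
  | tt | ff => rfl
  | and φ₁ φ₂ ih₁ ih₂ => exact and_congr (ih₁ h) (ih₂ h)
  | or φ₁ φ₂ ih₁ ih₂ => exact or_congr (ih₁ h) (ih₂ h)
  | next φ ih =>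
    exact ih (sat_suff_suff_iff h 1)
  | untl φ₁ φ₂ ih₁ ih₂ =>
    simp only [subst, Sat, ih₁ (sat_suff_suff_iff h _), ih₂ (sat_suff_suff_iff h _)]
  | wuntl φ₁ φ₂ ih₁ ih₂ =>
    simp only [subst, Sat, ih₁ (sat_suff_suff_iff h _), ih₂ (sat_suff_suff_iff h _)]
  | gf φ ih =>
    simp only [subst, Sat, ih (sat_suff_suff_iff h _)]
  | fg φ ih =>
    simp only [subst, Sat, ih (sat_suff_suff_iff h _)]

theorem sat_subst_mono {φ : EP Ap} (hφ : posOnly φ) {χ₁ χ₂ : E Ap}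
    (h : ∀ w : Word Ap, Sat w χ₁ → Sat w χ₂) {w : Word Ap} :
    Sat w (subst φ χ₁) → Sat w (subst φ χ₂) := by
  induction φ generalizing w with
  | pos a =>
    cases a with
    | none => exact h w
    | some a => exact id
  | nlit a =>
    cases a with
    | none => exact hφ.elim
    | some a => exact id
  | tt | ff => exact id
  | and φ₁ φ₂ ih₁ ih₂ => exact And.imp (ih₁ hφ.1) (ih₂ hφ.2)
  | or φ₁ φ₂ ih₁ ih₂ => exact Or.imp (ih₁ hφ.1) (ih₂ hφ.2)
  | next φ ih => exact ih hφ
  | untl φ₁ φ₂ ih₁ ih₂ =>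
    exact Exists.imp fun k => And.imp (ih₂ hφ.2) fun ha j hj => ih₁ hφ.1 (ha j hj)
  | wuntl φ₁ φ₂ ih₁ ih₂ =>
    exact Or.imp (fun hg k => ih₁ hφ.1 (hg k))
      (Exists.imp fun k => And.imp (ih₂ hφ.2) fun ha j hj => ih₁ hφ.1 (ha j hj))
  | gf φ ih =>
    exact fun hg i => (hg i).imp fun j => And.imp_right (ih hφ)
  | fg φ ih =>
    exact Exists.imp fun i hi j hj => ih hφ (hi j hj)

theorem sat_subst_of_prefixIndependent {φ : EP Ap} (hφ : posOnly φ)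
    {χ : E Ap} (hχ : PrefixIndependent χ) (w : Word Ap) :
    Sat w (subst φ χ) ↔ (Sat w χ ∧ Sat w (subst φ E.tt)) ∨ Sat w (subst φ E.ff) := by
  by_cases hw : Sat w χ
  · have hff_tt : Sat w (subst φ E.ff) → Sat w (subst φ E.tt) :=
      sat_subst_mono hφ fun _ => False.elim
    rw [sat_subst_congr φ (χ₂ := E.tt) fun k => iff_true_intro ((hχ w k).2 hw)]
    tauto
  · rw [sat_subst_congr φ (χ₂ := E.ff) fun k => iff_false_intro (mt (hχ w k).1 hw)]
    tauto

end

theorem pull_limit_out_general {Ap : Type} :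
    ∀ φ : EP Ap, posOnly φ → ∀ ψ : E Ap,
      -- (1)  φ[GF ψ] ≡ (GF ψ ∧ φ[tt]) ∨ φ[ff]
      Equiv (subst φ (E.gf ψ))
            (E.or (E.and (E.gf ψ) (subst φ E.tt)) (subst φ E.ff)) ∧
      -- (2)  φ[FG ψ] ≡ (FG ψ ∧ φ[tt]) ∨ φ[ff]
      Equiv (subst φ (E.fg ψ))
            (E.or (E.and (E.fg ψ) (subst φ E.tt)) (subst φ E.ff)) := fun _ hφ _ =>
  ⟨sat_subst_of_prefixIndependent hφ (prefixIndependent_gf _),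
    sat_subst_of_prefixIndependent hφ (prefixIndependent_fg _)⟩

/-- pulling limit subformulas out of any formula. -/
theorem pull_limit_out {Ap : Type} [Fintype Ap] :
    ∀ φ : EP Ap, posOnly φ → ∀ ψ : E Ap,
      -- (1)  φ[GF ψ] ≡ (GF ψ ∧ φ[tt]) ∨ φ[ff]
      Equiv (subst φ (E.gf ψ))
            (E.or (E.and (E.gf ψ) (subst φ E.tt)) (subst φ E.ff)) ∧
      -- (2)  φ[FG ψ] ≡ (FG ψ ∧ φ[tt]) ∨ φ[ff]
      Equiv (subst φ (E.fg ψ))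
            (E.or (E.and (E.fg ψ) (subst φ E.tt)) (subst φ E.ff)) :=
  pull_limit_out_general

end ExtLTL
end
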